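/- Let M ∈ ℝ, c ∈ ℝ with c ≠ 0, and let H be the map H(x,y) = (x̄, ȳ) with x̄ = M + c·x − y², ȳ = (y + x̄² − M)/c. Then H has a fixed point (x₀, x₀) on the diagonal at which the Jacobian matrix of H has eigenvalue +1 if and only if 4M = −(c − 1)² or 4M = 3(c − 1)². (These are the fold curve F₀ and the pitchfork curve PF of the family H.) -/

import Mathlib

/-- The map `H(x,y) = (x̄, ȳ)` with `x̄ = M + c·x − y²` and `ȳ = (y + x̄² − M)/c`,
the explicit form of the implicit system `x̄ = M + c·x − y²`, `c·ȳ = −M + y + x̄²`. -/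
noncomputable def Hmap (M c : ℝ) (p : ℝ × ℝ) : ℝ × ℝ :=
  (M + c * p.1 - p.2 ^ 2,
    (p.2 + (M + c * p.1 - p.2 ^ 2) ^ 2 - M) / c)

/-- The Jacobian matrix (2×2 real derivative matrix) of `Hmap M c` at the point
`(x,y)`, where `x̄ = M + c·x − y²`:
`[[c, −2y], [2x̄, (1 − 4x̄y)/c]]`. -/
noncomputable def HJac (M c : ℝ) (p : ℝ × ℝ) : Matrix (Fin 2) (Fin 2) ℝ :=
  !![c, -2 * p.2;
     2 * (M + c * p.1 - p.2 ^ 2), (1 - 4 * (M + c * p.1 - p.2 ^ 2) * p.2) / c]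

/-- `μ ∈ ℂ` is an eigenvalue of the real 2×2 matrix `A`
(eigenvalues of real matrices are taken over `ℂ`). -/
def hasEigenvalue (A : Matrix (Fin 2) (Fin 2) ℝ) (μ : ℂ) : Prop :=
  (A.map (fun t : ℝ => (t : ℂ)) - μ • 1).det = 0

/-! The diagonal fixed points of `H` lie on the parabola `M = x² + (1 - c) x`, and there
`det (DH - 1) = (4x² - (c - 1)²) / c`; so eigenvalue `1` occurs exactly at `2x = ±(c - 1)`,
which on the parabola gives `4M = -(c - 1)²` resp. `4M = 3(c - 1)²`. -/

lemma hasEigenvalue_ofReal_iff (A : Matrix (Fin 2) (Fin 2) ℝ) (μ : ℝ) :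
    hasEigenvalue A μ ↔ (A - μ • 1).det = 0 := by
  have hmap : A.map (fun t : ℝ => (t : ℂ)) - (μ : ℂ) • 1 =
      Complex.ofRealHom.mapMatrix (A - μ • 1) := by
    ext i j
    by_cases hij : i = j <;> simp [hij]
  rw [hasEigenvalue, hmap, ← RingHom.map_det, Complex.ofRealHom_eq_coe, Complex.ofReal_eq_zero]

lemma Hmap_diag_eq_self_iff {M c : ℝ} (hc : c ≠ 0) (x : ℝ) :
    Hmap M c (x, x) = (x, x) ↔ M = x ^ 2 + (1 - c) * x := by
  simp only [Hmap, Prod.mk.injEq, div_eq_iff hc]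
  constructor
  · rintro ⟨h, -⟩
    linear_combination h
  · intro h
    subst h
    constructor <;> ring

lemma hasEigenvalue_one_HJac_diag_iff {M c x : ℝ} (hc : c ≠ 0)
    (hfix : M = x ^ 2 + (1 - c) * x) :
    hasEigenvalue (HJac M c (x, x)) 1 ↔ (2 * x) ^ 2 = (c - 1) ^ 2 := by
  have hdet : (HJac M c (x, x) - (1 : ℝ) • 1).det = ((2 * x) ^ 2 - (c - 1) ^ 2) / c := by
    subst hfix
    rw [Matrix.det_fin_two]
    simp only [HJac, one_smul, Matrix.one_fin_two, Matrix.sub_apply, Matrix.of_apply,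
      Matrix.cons_val', Matrix.cons_val_zero, Matrix.cons_val_one, Matrix.cons_val_fin_one]
    field_simp
    ring
  rw [← Complex.ofReal_one, hasEigenvalue_ofReal_iff, hdet, div_eq_zero_iff, sub_eq_zero]
  simp [hc]

lemma exists_parabola_fold_iff (M c : ℝ) :
    (∃ x : ℝ, M = x ^ 2 + (1 - c) * x ∧ (2 * x) ^ 2 = (c - 1) ^ 2) ↔
      (4 * M = -(c - 1) ^ 2 ∨ 4 * M = 3 * (c - 1) ^ 2) := by
  constructor
  · rintro ⟨x, rfl, hx⟩
    rcases sq_eq_sq_iff_eq_or_eq_neg.1 hx with h | h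
    · left; linear_combination (2 * x - (c - 1)) * h
    · right; linear_combination (2 * x - 3 * (c - 1)) * h
  · rintro (h | h)
    · exact ⟨(c - 1) / 2, by linear_combination h / 4, by ring⟩
    · exact ⟨-(c - 1) / 2, by linear_combination h / 4, by ring⟩

/-- `H` has a diagonal fixed point at which the Jacobian matrix has
eigenvalue `+1` iff `4M = −(c−1)²` (fold curve `F₀`) or `4M = 3(c−1)²` (pitchfork
curve `PF`). -/
theorem stmt_12 (M c : ℝ) (hc : c ≠ 0) :
    (∃ x₀ : ℝ, Hmap M c (x₀, x₀) = (x₀, x₀) ∧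
        hasEigenvalue (HJac M c (x₀, x₀)) 1) ↔
      (4 * M = -(c - 1) ^ 2 ∨ 4 * M = 3 * (c - 1) ^ 2) := by
  rw [← exists_parabola_fold_iff]
  refine exists_congr fun x => ?_
  rw [Hmap_diag_eq_self_iff hc]
  exact and_congr_right (hasEigenvalue_one_HJac_diag_iff hc)
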